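/- arXiv:1804.01602 — 5 statements merged into one kernel-verified Lean document; each statement's English description precedes it below -/
import Mathlib

section
/- Let q be a prime, χ a nontrivial Dirichlet character modulo q, and c a positive integer with q² ∣ c. Then for all integers r, n with gcd(r, q) = 1, the twisted Kloosterman sum vanishes: S_χ(r, nq, c) = 0. -/
/-- `e(x) = exp(2πix)`. -/
noncomputable def e (x : ℂ) : ℂ := Complex.exp (2 * Real.pi * Complex.I * x)

/-- The twisted Kloosterman sum `S_χ(m, n, c) = Σ_{d ∈ (ℤ/cℤ)ˣ} χ(d) e((m d + n d⁻¹)/c)`,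
where `χ(d)` is evaluated at the reduction of `d` modulo `q`. -/
noncomputable def SklChi {q : ℕ} (χ : DirichletCharacter ℂ q) (m n : ℤ) (c : ℕ) : ℂ :=
  ∑ᶠ d : (ZMod c)ˣ,
    χ (((d : ZMod c).val : ZMod q)) *
      e ((m * ((d : ZMod c).val : ℂ) + n * (((d⁻¹ : (ZMod c)ˣ) : ZMod c).val : ℂ)) / (c : ℂ))

/-!
Write `c = q b` with `q ∣ b`. Then `b² = 0` and `q b = 0` in `ℤ/cℤ`, so `u = 1 + b` is a unit
with inverse `1 - b`, and `u ≡ 1 mod q`. Substituting `d ↦ d u` leaves `χ(d)` and the term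
`n q d⁻¹` unchanged and shifts `r d` by `b r d`, i.e. multiplies the summand by
`ζ_d = e(r d / q)`, which is again unchanged by `d ↦ d u`. Hence `d ↦ d uᵗ` multiplies the
summand by `ζ_dᵗ`; averaging over `t < q` gives `q S = Σ_d (Σ_{t<q} ζ_dᵗ) (summand) = 0`,
because `ζ_d` is a `q`-th root of unity and `ζ_d ≠ 1` as `q ∤ r d`.
-/

open Finset ZMod

theorem Fintype.sum_eq_zero_of_apply_mul_eq_mul_apply {G R : Type*} [Group G] [Fintype G]
    [CommRing R] [IsDomain R] (F ζ : G → R) (u : G) (q : ℕ) (hq : (q : R) ≠ 0)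
    (hFu : ∀ d, F (d * u) = ζ d * F d) (hζu : ∀ d, ζ (d * u) = ζ d)
    (hζq : ∀ d, ζ d ^ q = 1) (hζ1 : ∀ d, ζ d ≠ 1) :
    ∑ d, F d = 0 := by
  have hζpow : ∀ t d, ζ (d * u ^ t) = ζ d := by
    intro t
    induction t with
    | zero => simp
    | succ t ih => intro d; rw [pow_succ, ← mul_assoc, hζu, ih]
  have hFpow : ∀ t d, F (d * u ^ t) = ζ d ^ t * F d := by
    intro t
    induction t with
    | zero => simp
    | succ t ih => intro d; rw [pow_succ, ← mul_assoc, hFu, ih, hζpow, pow_succ]; ring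
  have hgeom : ∀ d, ∑ t ∈ range q, ζ d ^ t = 0 := fun d =>
    (mul_eq_zero.mp (by rw [geom_sum_mul, hζq, sub_self])).resolve_right
      (sub_ne_zero.mpr (hζ1 d))
  have hsum : (q : R) * ∑ d, F d = 0 := calc
    (q : R) * ∑ d, F d = ∑ t ∈ range q, ∑ d, F d := by simp
    _ = ∑ t ∈ range q, ∑ d, F (d * u ^ t) :=
      Finset.sum_congr rfl fun t _ => (Equiv.sum_comp (Equiv.mulRight (u ^ t)) F).symm
    _ = ∑ d, (∑ t ∈ range q, ζ d ^ t) * F d := by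
      simp_rw [hFpow, sum_mul]
      exact sum_comm
    _ = 0 := by simp [hgeom]
  exact (mul_eq_zero.mp hsum).resolve_left hq

@[simps]
def Units.oneAddOfMulSelfEqZero {R : Type*} [CommRing R] (b : R) (hb : b * b = 0) : Rˣ :=
  ⟨1 + b, 1 - b, by linear_combination -hb, by linear_combination -hb⟩

lemma ZMod.natCast_mul_eq_zero_iff_cast_eq_zero {q b c : ℕ} [NeZero c] (hc : c = q * b)
    (x : ZMod c) : (b : ZMod c) * x = 0 ↔ (ZMod.cast x : ZMod q) = 0 := by
  have hb : 0 < b := Nat.pos_of_ne_zero (by rintro rfl; exact NeZero.ne c (by simpa using hc))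
  subst hc
  conv_lhs => rw [← natCast_zmod_val x]
  rw [← Nat.cast_mul, natCast_eq_zero_iff, ← natCast_val, natCast_eq_zero_iff, Nat.mul_comm b,
    Nat.mul_dvd_mul_iff_right hb]

lemma ZMod.stdAddChar_natCast_mul_ne_one {q b c : ℕ} [NeZero c] (hc : c = q * b) {x : ZMod c}
    (hx : (ZMod.cast x : ZMod q) ≠ 0) : stdAddChar ((b : ZMod c) * x) ≠ 1 := by
  rwa [Ne, ← AddChar.map_zero_eq_one (stdAddChar (N := c)), injective_stdAddChar.eq_iff,
    natCast_mul_eq_zero_iff_cast_eq_zero hc]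

lemma e_intCast_div_eq_stdAddChar (N : ℕ) [NeZero N] (j : ℤ) :
    e (j / N) = stdAddChar (j : ZMod N) := by
  rw [stdAddChar_coe, e, mul_div_assoc]

noncomputable def twistedKloostermanTerm {q : ℕ} (χ : DirichletCharacter ℂ q) (m n : ℤ)
    (c : ℕ) [NeZero c] (d : (ZMod c)ˣ) : ℂ :=
  χ (ZMod.cast (d : ZMod c)) *
    stdAddChar ((m : ZMod c) * (d : ZMod c) + (n : ZMod c) * ((d⁻¹ : (ZMod c)ˣ) : ZMod c))

lemma SklChi_eq_sum_twistedKloostermanTerm {q : ℕ} (χ : DirichletCharacter ℂ q) (m n : ℤ)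
    (c : ℕ) [NeZero c] : SklChi χ m n c = ∑ d, twistedKloostermanTerm χ m n c d := by
  rw [SklChi, finsum_eq_sum_of_fintype]
  refine Finset.sum_congr rfl fun d _ => ?_
  have hint : (m : ZMod c) * d + n * ((d⁻¹ : (ZMod c)ˣ) : ZMod c) =
      ((m * (d : ZMod c).val + n * ((d⁻¹ : (ZMod c)ˣ) : ZMod c).val : ℤ) : ZMod c) := by
    push_cast [natCast_zmod_val]
    rfl
  rw [twistedKloostermanTerm, natCast_val, hint, ← e_intCast_div_eq_stdAddChar]
  push_cast
  rfl

lemma twistedKloostermanTerm_mul_oneAdd {q c : ℕ} [NeZero c] (hqc : q ∣ c)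
    (χ : DirichletCharacter ℂ q) (m n : ℤ) {b : ZMod c} (hbb : b * b = 0)
    (hbq : (ZMod.cast b : ZMod q) = 0) (hnb : (n : ZMod c) * b = 0) (d : (ZMod c)ˣ) :
    twistedKloostermanTerm χ m n c (d * Units.oneAddOfMulSelfEqZero b hbb) =
      stdAddChar (b * ((m : ZMod c) * (d : ZMod c))) * twistedKloostermanTerm χ m n c d := by
  have hχ : (ZMod.cast ((d : ZMod c) * (1 + b)) : ZMod q) = ZMod.cast (d : ZMod c) := by
    rw [cast_mul hqc, cast_add hqc, cast_one hqc, hbq, add_zero, mul_one]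
  have harg : (m : ZMod c) * ((d : ZMod c) * (1 + b)) +
      (n : ZMod c) * ((1 - b) * ((d⁻¹ : (ZMod c)ˣ) : ZMod c)) =
      b * ((m : ZMod c) * (d : ZMod c)) +
        ((m : ZMod c) * (d : ZMod c) + (n : ZMod c) * ((d⁻¹ : (ZMod c)ˣ) : ZMod c)) := by
    linear_combination -((d⁻¹ : (ZMod c)ˣ) : ZMod c) * hnb
  simp only [twistedKloostermanTerm, mul_inv_rev, Units.val_mul,
    Units.val_oneAddOfMulSelfEqZero, Units.val_inv_oneAddOfMulSelfEqZero, hχ, harg,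
    AddChar.map_add_eq_mul]
  ring

lemma sum_twistedKloostermanTerm_eq_zero {q b c : ℕ} [NeZero c] (hq : 1 < q) (hc : c = q * b)
    (hqb : q ∣ b) (χ : DirichletCharacter ℂ q) {m n : ℤ} (hm : IsUnit (m : ZMod q))
    (hn : (q : ℤ) ∣ n) : ∑ d, twistedKloostermanTerm χ m n c d = 0 := by
  have : Fact (1 < q) := ⟨hq⟩
  have hqc : q ∣ c := Dvd.intro b hc.symm
  have hbb : (b : ZMod c) * b = 0 := by
    rw [← Nat.cast_mul, natCast_eq_zero_iff, hc]
    exact Nat.mul_dvd_mul_right hqb b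
  have hqb' : (q : ZMod c) * b = 0 := by rw [← Nat.cast_mul, ← hc, natCast_self]
  have hbq : (ZMod.cast (b : ZMod c) : ZMod q) = 0 := by
    rwa [cast_natCast hqc, natCast_eq_zero_iff]
  have hnb : (n : ZMod c) * b = 0 := by
    obtain ⟨n, rfl⟩ := hn
    push_cast
    rw [mul_comm (q : ZMod c), mul_assoc, hqb', mul_zero]
  refine Fintype.sum_eq_zero_of_apply_mul_eq_mul_apply _
    (fun d => stdAddChar ((b : ZMod c) * ((m : ZMod c) * (d : ZMod c))))
    (Units.oneAddOfMulSelfEqZero _ hbb) q (by exact_mod_cast (zero_lt_one.trans hq).ne')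
    (twistedKloostermanTerm_mul_oneAdd hqc χ m n hbb hbq hnb) (fun d => ?_) (fun d => ?_)
    (fun d => ?_)
  · congr 1
    simp only [Units.val_mul, Units.val_oneAddOfMulSelfEqZero]
    linear_combination (m * (d : ZMod c)) * hbb
  · rw [← AddChar.map_nsmul_eq_pow, nsmul_eq_mul, ← mul_assoc, hqb', zero_mul,
      AddChar.map_zero_eq_one]
  · refine stdAddChar_natCast_mul_ne_one hc ?_
    rw [cast_mul hqc, cast_intCast hqc]
    exact (hm.mul (isUnit_cast_of_dvd hqc d)).ne_zero

theorem twisted_kloosterman_vanishes_of_sq_dvd_general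
    (q : ℕ) (hq : q.Prime) (χ : DirichletCharacter ℂ q)
    (c : ℕ) (hc : 0 < c) (hq2c : q ^ 2 ∣ c)
    (r n : ℤ) (hr : Int.gcd r (q : ℤ) = 1) :
    SklChi χ r (n * q) c = 0 := by
  have : NeZero c := ⟨hc.ne'⟩
  obtain ⟨k, hk⟩ := hq2c
  have hr_unit : IsUnit (r : ZMod q) := (coe_int_isUnit_iff_isCoprime r q).mpr
    (isCoprime_comm.mp (Int.isCoprime_iff_gcd_eq_one.mpr hr))
  rw [SklChi_eq_sum_twistedKloostermanTerm]
  exact sum_twistedKloostermanTerm_eq_zero hq.one_lt (b := q * k) (by rw [hk]; ring)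
    (dvd_mul_right q k) χ hr_unit (dvd_mul_left _ _)

/-- If `q` is prime, `χ` a nontrivial Dirichlet character mod `q` and `q² ∣ c`, then
`S_χ(r, nq, c) = 0` for all `r` coprime to `q`. -/
theorem twisted_kloosterman_vanishes_of_sq_dvd
    (q : ℕ) (hq : q.Prime) (χ : DirichletCharacter ℂ q) (hχ : χ ≠ 1)
    (c : ℕ) (hc : 0 < c) (hq2c : q ^ 2 ∣ c)
    (r n : ℤ) (hr : Int.gcd r (q : ℤ) = 1) :
    SklChi χ r (n * q) c = 0 :=
  twisted_kloosterman_vanishes_of_sq_dvd_general q hq χ c hc hq2c r n hr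
end

section
/- Let q be a prime, χ a nontrivial Dirichlet character modulo q, and c a positive integer with gcd(c, q) = 1. Then for all integers r and n, S_χ(r, nq, qc) = τ(χ) · χ̄(r) · χ(c) · S(r q̄, n, c), where q̄ denotes an integer with q q̄ ≡ 1 (mod c). -/
/-- The (untwisted) Kloosterman sum `S(m, n, c) = Σ_{d ∈ (ℤ/cℤ)ˣ} e((m d + n d⁻¹)/c)`. -/
noncomputable def Skl (m n : ℤ) (c : ℕ) : ℂ :=
  ∑ᶠ d : (ZMod c)ˣ,
    e ((m * ((d : ZMod c).val : ℂ) + n * (((d⁻¹ : (ZMod c)ˣ) : ZMod c).val : ℂ)) / (c : ℂ))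

/-- The Gauss sum `τ(χ) = Σ_{x mod q} χ(x) e(x/q)`. -/
noncomputable def gaussSumE {q : ℕ} (χ : DirichletCharacter ℂ q) : ℂ :=
  ∑ᶠ x : ZMod q, χ x * e ((x.val : ℂ) / (q : ℂ))

lemma e_add (x y : ℂ) : e (x + y) = e x * e y := by
  simp [e, mul_add, Complex.exp_add]

lemma e_int (k : ℤ) : e (k : ℂ) = 1 := by
  rw [e, show (2 * (Real.pi:ℂ) * Complex.I * (k:ℂ)) = (k:ℂ) * (2 * Real.pi * Complex.I) by ring]
  exact Complex.exp_int_mul_two_pi_mul_I k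

lemma e_congr {N : ℕ} (hN : N ≠ 0) {a b : ℤ} (h : (a : ZMod N) = (b : ZMod N)) :
    e ((a : ℂ) / N) = e ((b : ℂ) / N) := by
  rw [ZMod.intCast_eq_intCast_iff] at h
  obtain ⟨k, hk⟩ := h.dvd
  have hN' : (N : ℂ) ≠ 0 := Nat.cast_ne_zero.mpr hN
  have hb : (b : ℂ) / N = (a : ℂ) / N + (k : ℂ) := by
    have : (b : ℤ) = a + N * k := by linarith [hk]
    rw [this]; push_cast; field_simp
  rw [hb, e_add, e_int, mul_one]

lemma sum_units_eq {N : ℕ} [NeZero N] (F : ZMod N → ℂ) (h0 : ∀ x, ¬ IsUnit x → F x = 0) :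
    ∑ x : ZMod N, F x = ∑ a : (ZMod N)ˣ, F ↑a := by
  classical
  have h1 : ∑ a : (ZMod N)ˣ, F ↑a
      = ∑ x ∈ Finset.univ.image (fun a : (ZMod N)ˣ => (a : ZMod N)), F x :=
    (Finset.sum_image (fun a _ b _ h => Units.ext h)).symm
  rw [h1]
  refine (Finset.sum_subset (Finset.subset_univ _) ?_).symm
  intro x _ hx
  refine h0 x fun hu => hx ?_
  exact Finset.mem_image.mpr ⟨hu.unit, Finset.mem_univ _, rfl⟩

lemma gauss_part (q : ℕ) [NeZero q] (hq : q.Prime) (χ : DirichletCharacter ℂ q) (hχ : χ ≠ 1) (t : ℤ) :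
    ∑ a : (ZMod q)ˣ, χ ↑a * e (((t * ((a : ZMod q).val : ℤ) : ℤ) : ℂ) / q)
      = gaussSumE χ * (starRingEnd ℂ) (χ (t : ZMod q)) := by
  haveI : Fact q.Prime := ⟨hq⟩
  have hq0 : q ≠ 0 := hq.ne_zero
  have hgauss : gaussSumE χ = ∑ a : (ZMod q)ˣ, χ ↑a * e (((((a : ZMod q).val : ℕ) : ℤ) : ℂ) / q) := by
    rw [gaussSumE, finsum_eq_sum_of_fintype]
    rw [sum_units_eq (fun x => χ x * e ((x.val : ℂ) / q))
      (fun x hx => by simp [MulChar.map_nonunit χ hx])]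
    simp
  by_cases ht : IsUnit ((t : ℤ) : ZMod q)
  · set u := ht.unit with hu
    have huv : (u : ZMod q) = ((t : ℤ) : ZMod q) := ht.unit_spec
    have key : ∀ w : (ZMod q)ˣ,
        χ ↑(u⁻¹ * w) * e (((t * (((u⁻¹ * w : (ZMod q)ˣ) : ZMod q).val : ℤ) : ℤ) : ℂ) / q)
          = χ ↑u⁻¹ * (χ ↑w * e (((((w : ZMod q).val : ℕ) : ℤ) : ℂ) / q)) := by
      intro w
      have hcong : ((t * (((u⁻¹ * w : (ZMod q)ˣ) : ZMod q).val : ℤ) : ℤ) : ZMod q)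
          = ((((w : ZMod q).val : ℕ) : ℤ) : ZMod q) := by
        push_cast
        rw [ZMod.natCast_val, ZMod.natCast_val, ZMod.cast_id, ZMod.cast_id, ← huv]
        exact mul_inv_cancel_left₀ u.ne_zero _
      rw [e_congr hq0 hcong, Units.val_mul, map_mul]
      ring
    have hre : ∑ a : (ZMod q)ˣ, χ ↑a * e (((t * (((a : (ZMod q)ˣ) : ZMod q).val : ℤ) : ℤ) : ℂ) / q)
        = ∑ w : (ZMod q)ˣ, χ ↑(u⁻¹ * w) * e (((t * (((u⁻¹ * w : (ZMod q)ˣ) : ZMod q).val : ℤ) : ℤ) : ℂ) / q) := by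
      exact (Fintype.sum_bijective (fun w : (ZMod q)ˣ => u⁻¹ * w)
        (Group.mulLeft_bijective u⁻¹) _ _ (fun w => rfl)).symm
    rw [hre, Finset.sum_congr rfl (fun w _ => key w), ← Finset.mul_sum, ← hgauss]
    have hstar : (starRingEnd ℂ) (χ ((t : ℤ) : ZMod q)) = χ ↑u⁻¹ := by
      have h1 : χ ↑u⁻¹ * χ ↑u = 1 := by
        rw [← map_mul, ← Units.val_mul, inv_mul_cancel, Units.val_one, map_one]
      have h2 : (starRingEnd ℂ) (χ ((t : ℤ) : ZMod q)) = (χ ((t : ℤ) : ZMod q))⁻¹ := by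
        rw [show (starRingEnd ℂ) (χ ((t : ℤ) : ZMod q)) = star (χ ((t : ℤ) : ZMod q)) from rfl,
          MulChar.star_apply', MulChar.inv_apply_eq_inv']
      rw [h2, ← huv]
      exact (eq_inv_of_mul_eq_one_left h1).symm
    rw [hstar]; ring
  · have htz : ((t : ℤ) : ZMod q) = 0 := by
      by_contra h
      exact ht (isUnit_iff_ne_zero.mpr h)
    have hchi0 : χ ((t : ℤ) : ZMod q) = 0 := by
      rw [htz]; exact MulChar.map_nonunit χ not_isUnit_zero
    rw [hchi0]
    simp only [map_zero, mul_zero]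
    have hone : ∀ a : (ZMod q)ˣ,
        e (((t * (((a : (ZMod q)ˣ) : ZMod q).val : ℤ) : ℤ) : ℂ) / q) = 1 := by
      intro a
      have hcong : ((t * (((a : (ZMod q)ˣ) : ZMod q).val : ℤ) : ℤ) : ZMod q) = ((0 : ℤ) : ZMod q) := by
        push_cast
        rw [htz, zero_mul]
      rw [e_congr hq0 hcong]
      norm_num [e]
    simp_rw [hone, mul_one]
    have : ∑ x : ZMod q, χ x = 0 := MulChar.sum_eq_zero_of_ne_one hχ
    rw [← sum_units_eq (fun x => χ x) (fun x hx => MulChar.map_nonunit χ hx), this]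

lemma conj_chi {q : ℕ} [NeZero q] (χ : DirichletCharacter ℂ q) (x : ZMod q) :
    (starRingEnd ℂ) (χ x) = (χ x)⁻¹ := by
  rw [show (starRingEnd ℂ) (χ x) = star (χ x) from rfl,
    MulChar.star_apply', MulChar.inv_apply_eq_inv']

noncomputable def crtUnits (q c : ℕ) (h : Nat.Coprime q c) :
    (ZMod (q*c))ˣ ≃* (ZMod q)ˣ × (ZMod c)ˣ :=
  (Units.mapEquiv (ZMod.chineseRemainder h).toMulEquiv).trans MulEquiv.prodUnits

lemma crtUnits_fst (q c : ℕ) [NeZero (q*c)] (h : Nat.Coprime q c) (d : (ZMod (q*c))ˣ) :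
    ((crtUnits q c h d).1 : ZMod q) = (((d : ZMod (q*c)).val : ℕ) : ZMod q) := by
  have h0 : ((crtUnits q c h d).1 : ZMod q)
      = (ZMod.chineseRemainder h (d : ZMod (q*c)) : ZMod q × ZMod c).1 := rfl
  have h1 : (ZMod.chineseRemainder h (d : ZMod (q*c)) : ZMod q × ZMod c)
      = ZMod.castHom (show Nat.lcm q c ∣ q * c by simp [Nat.lcm_dvd_iff])
          (ZMod q × ZMod c) (d : ZMod (q*c)) := rfl
  rw [h0, h1, ZMod.castHom_apply, Prod.fst_zmod_cast]
  exact (ZMod.natCast_val _).symm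

lemma crtUnits_snd (q c : ℕ) [NeZero (q*c)] (h : Nat.Coprime q c) (d : (ZMod (q*c))ˣ) :
    ((crtUnits q c h d).2 : ZMod c) = (((d : ZMod (q*c)).val : ℕ) : ZMod c) := by
  have h0 : ((crtUnits q c h d).2 : ZMod c)
      = (ZMod.chineseRemainder h (d : ZMod (q*c)) : ZMod q × ZMod c).2 := rfl
  have h1 : (ZMod.chineseRemainder h (d : ZMod (q*c)) : ZMod q × ZMod c)
      = ZMod.castHom (show Nat.lcm q c ∣ q * c by simp [Nat.lcm_dvd_iff])
          (ZMod q × ZMod c) (d : ZMod (q*c)) := rfl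
  rw [h0, h1, ZMod.castHom_apply, Prod.snd_zmod_cast]
  exact (ZMod.natCast_val _).symm

lemma crtUnits_fst_inv (q c : ℕ) [NeZero (q*c)] (h : Nat.Coprime q c) (d : (ZMod (q*c))ˣ) :
    (((crtUnits q c h d).1⁻¹ : (ZMod q)ˣ) : ZMod q)
      = ((((d⁻¹ : (ZMod (q*c))ˣ) : ZMod (q*c)).val : ℕ) : ZMod q) := by
  have h0 : (crtUnits q c h d).1⁻¹ = (crtUnits q c h d⁻¹).1 := by
    rw [map_inv]; rfl
  rw [h0, crtUnits_fst]

lemma crtUnits_snd_inv (q c : ℕ) [NeZero (q*c)] (h : Nat.Coprime q c) (d : (ZMod (q*c))ˣ) :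
    (((crtUnits q c h d).2⁻¹ : (ZMod c)ˣ) : ZMod c)
      = ((((d⁻¹ : (ZMod (q*c))ˣ) : ZMod (q*c)).val : ℕ) : ZMod c) := by
  have h0 : (crtUnits q c h d).2⁻¹ = (crtUnits q c h d⁻¹).2 := by
    rw [map_inv]; rfl
  rw [h0, crtUnits_snd]


set_option maxHeartbeats 1000000 in
/-- Twisted multiplicativity: for `q` prime, `χ` nontrivial mod `q`, `(c, q) = 1`, and
`q q̄ ≡ 1 (mod c)`, one has `S_χ(r, nq, qc) = τ(χ) χ̄(r) χ(c) S(r q̄, n, c)`. -/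
theorem twisted_kloosterman_multiplicativity
    (q : ℕ) (hq : q.Prime) (χ : DirichletCharacter ℂ q) (hχ : χ ≠ 1)
    (c : ℕ) (hc : 0 < c) (hcq : Nat.Coprime c q)
    (r n qbar : ℤ) (hqbar : (q : ℤ) * qbar ≡ 1 [ZMOD (c : ℤ)]) :
    SklChi χ r (n * q) (q * c)
      = gaussSumE χ * (starRingEnd ℂ) (χ (r : ZMod q)) * χ (c : ZMod q)
          * Skl (r * qbar) n c := by
  haveI : Fact q.Prime := ⟨hq⟩
  have hq0 : q ≠ 0 := hq.ne_zero
  have hc0 : c ≠ 0 := hc.ne'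
  haveI : NeZero c := ⟨hc0⟩
  have hqc0 : q * c ≠ 0 := mul_ne_zero hq0 hc0
  haveI : NeZero (q * c) := ⟨hqc0⟩
  have hqc : Nat.Coprime q c := hcq.symm
  -- get cb with cb * c + vb * q = 1
  obtain ⟨cb, vb, hcb⟩ : ∃ u v : ℤ, u * (c : ℤ) + v * (q : ℤ) = 1 := by
    have hco : IsCoprime (c : ℤ) (q : ℤ) := by
      rw [Int.isCoprime_iff_gcd_eq_one]
      exact hcq
    obtain ⟨u, v, huv⟩ := hco
    exact ⟨u, v, huv⟩
  set Φ := crtUnits q c hqc with hΦ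
  -- the two factor functions
  set g1 : (ZMod q)ˣ → ℂ :=
    fun a => χ ↑a * e ((((r * cb) * (((a : ZMod q).val : ℕ) : ℤ) : ℤ) : ℂ) / q) with hg1
  set g2 : (ZMod c)ˣ → ℂ :=
    fun b => e (((r * qbar * (((b : ZMod c).val : ℕ) : ℤ)
      + n * ((((b⁻¹ : (ZMod c)ˣ) : ZMod c).val : ℕ) : ℤ) : ℤ) : ℂ) / c) with hg2
  -- congruence facts
  have hqq : ((q : ℕ) : ZMod q) = 0 := ZMod.natCast_self q
  have hq1c : ((q : ℕ) : ZMod c) * ((qbar : ℤ) : ZMod c) = 1 := by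
    have := (ZMod.intCast_eq_intCast_iff ((q : ℤ) * qbar) 1 c).mpr hqbar
    push_cast at this
    linear_combination this
  -- per-term identity
  have key : ∀ d : (ZMod (q*c))ˣ,
      χ ((((d : ZMod (q*c)).val : ℕ) : ZMod q)) *
        e (((r : ℂ) * (((d : ZMod (q*c)).val : ℕ) : ℂ)
          + ((n * q : ℤ) : ℂ) * ((((d⁻¹ : (ZMod (q*c))ˣ) : ZMod (q*c)).val : ℕ) : ℂ)) / ((q * c : ℕ) : ℂ))
        = g1 (Φ d).1 * g2 (Φ d).2 := by
    intro d
    set A : ℤ := (((d : ZMod (q*c)).val : ℕ) : ℤ) with hA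
    set A' : ℤ := ((((d⁻¹ : (ZMod (q*c))ˣ) : ZMod (q*c)).val : ℕ) : ℤ) with hA'
    set X : ℤ := r * A + (n * q) * A' with hX
    have hfq : ((A : ℤ) : ZMod q) = (((Φ d).1 : ZMod q)) := by
      rw [hA]; push_cast; rw [crtUnits_fst]
    have hfc : ((A : ℤ) : ZMod c) = (((Φ d).2 : ZMod c)) := by
      rw [hA]; push_cast; rw [crtUnits_snd]
    have hfc' : ((A' : ℤ) : ZMod c) = ((((Φ d).2⁻¹ : (ZMod c)ˣ) : ZMod c)) := by
      rw [hA']; push_cast; rw [crtUnits_snd_inv]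
    -- rewrite the complex argument as integer cast
    have harg : ((r : ℂ) * (((d : ZMod (q*c)).val : ℕ) : ℂ)
          + ((n * q : ℤ) : ℂ) * ((((d⁻¹ : (ZMod (q*c))ˣ) : ZMod (q*c)).val : ℕ) : ℂ)) / ((q * c : ℕ) : ℂ)
        = ((X : ℤ) : ℂ) / ((q * c : ℕ) : ℂ) := by
      rw [hX, hA, hA']; push_cast; ring
    rw [harg]
    -- step 1: multiply by (c*cb + q*qbar)
    have hmod : ((X : ℤ) : ZMod (q*c)) = ((X * ((c : ℤ) * cb + (q : ℤ) * qbar) : ℤ) : ZMod (q*c)) := by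
      rw [ZMod.intCast_eq_intCast_iff]
      have hmq : X ≡ X * ((c : ℤ) * cb + (q : ℤ) * qbar) [ZMOD (q : ℤ)] := by
        have h1 : (1 : ℤ) ≡ (c : ℤ) * cb + (q : ℤ) * qbar [ZMOD (q : ℤ)] := by
          rw [Int.modEq_iff_dvd]
          exact ⟨qbar - vb, by linear_combination hcb⟩
        calc X = X * 1 := (mul_one X).symm
        _ ≡ X * ((c : ℤ) * cb + (q : ℤ) * qbar) [ZMOD (q : ℤ)] := h1.mul_left X
      have hmc : X ≡ X * ((c : ℤ) * cb + (q : ℤ) * qbar) [ZMOD (c : ℤ)] := by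
        have h1 : (1 : ℤ) ≡ (c : ℤ) * cb + (q : ℤ) * qbar [ZMOD (c : ℤ)] := by
          obtain ⟨k, hk⟩ := hqbar.symm.dvd
          rw [Int.modEq_iff_dvd]
          exact ⟨cb + k, by linear_combination hk⟩
        calc X = X * 1 := (mul_one X).symm
        _ ≡ X * ((c : ℤ) * cb + (q : ℤ) * qbar) [ZMOD (c : ℤ)] := h1.mul_left X
      have hcop : (Int.natAbs (q : ℤ)).Coprime (Int.natAbs (c : ℤ)) := by simpa using hqc
      have := (Int.modEq_and_modEq_iff_modEq_mul hcop).mp ⟨hmq, hmc⟩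
      rw [show ((q * c : ℕ) : ℤ) = (q : ℤ) * (c : ℤ) by push_cast; ring]
      exact this
    rw [e_congr hqc0 hmod]
    -- step 2: split the fraction
    have hsplit : (((X * ((c : ℤ) * cb + (q : ℤ) * qbar) : ℤ)) : ℂ) / ((q * c : ℕ) : ℂ)
        = (((X * cb : ℤ)) : ℂ) / (q : ℂ) + (((X * qbar : ℤ)) : ℂ) / (c : ℂ) := by
      have hqC : (q : ℂ) ≠ 0 := Nat.cast_ne_zero.mpr hq0
      have hcC : (c : ℂ) ≠ 0 := Nat.cast_ne_zero.mpr hc0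
      push_cast
      field_simp
    rw [hsplit, e_add]
    -- step 3: identify the two factors
    have hq_factor : e (((X * cb : ℤ) : ℂ) / (q : ℂ))
        = e ((((r * cb) * (((((Φ d).1 : ZMod q)).val : ℕ) : ℤ) : ℤ) : ℂ) / q) := by
      apply e_congr hq0
      rw [hX]
      push_cast [ZMod.natCast_val, ZMod.cast_id]
      linear_combination ((r : ZMod q) * ((cb : ℤ) : ZMod q)) * hfq
        + ((n : ZMod q) * ((cb : ℤ) : ZMod q) * ((A' : ℤ) : ZMod q)) * hqq
    have hc_factor : e (((X * qbar : ℤ) : ℂ) / (c : ℂ))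
        = e (((r * qbar * (((((Φ d).2 : ZMod c)).val : ℕ) : ℤ)
            + n * ((((((Φ d).2⁻¹ : (ZMod c)ˣ) : ZMod c)).val : ℕ) : ℤ) : ℤ) : ℂ) / c) := by
      apply e_congr hc0
      rw [hX]
      push_cast [ZMod.natCast_val, ZMod.cast_id]
      linear_combination ((r : ZMod c) * ((qbar : ℤ) : ZMod c)) * hfc
        + ((n : ZMod c) * ((q : ℕ) : ZMod c) * ((qbar : ℤ) : ZMod c)) * hfc'
        + ((n : ZMod c) * ((((Φ d).2⁻¹ : (ZMod c)ˣ) : ZMod c))) * hq1c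
    rw [hq_factor, hc_factor, hg1, hg2]
    have hχa : χ ((((d : ZMod (q*c)).val : ℕ) : ZMod q)) = χ ((Φ d).1 : ZMod q) := by
      rw [crtUnits_fst]
    rw [hχa]
    ring
  -- assemble
  rw [SklChi, finsum_eq_sum_of_fintype]
  rw [Finset.sum_congr rfl (fun d _ => key d)]
  rw [show ∑ d : (ZMod (q*c))ˣ, g1 (Φ d).1 * g2 (Φ d).2
      = ∑ p : (ZMod q)ˣ × (ZMod c)ˣ, g1 p.1 * g2 p.2 from
    Φ.toEquiv.sum_comp (fun p : (ZMod q)ˣ × (ZMod c)ˣ => g1 p.1 * g2 p.2)]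
  rw [show ∑ p : (ZMod q)ˣ × (ZMod c)ˣ, g1 p.1 * g2 p.2
      = (∑ a : (ZMod q)ˣ, g1 a) * (∑ b : (ZMod c)ˣ, g2 b) from by
    rw [Finset.sum_mul_sum Finset.univ Finset.univ g1 g2]
    exact Fintype.sum_prod_type (fun p : (ZMod q)ˣ × (ZMod c)ˣ => g1 p.1 * g2 p.2)]
  have hS : ∑ b : (ZMod c)ˣ, g2 b = Skl (r * qbar) n c := by
    rw [Skl, finsum_eq_sum_of_fintype]
    refine Finset.sum_congr rfl (fun b _ => ?_)
    rw [hg2]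
    refine congrArg e ?_
    push_cast
    ring
  have hG : ∑ a : (ZMod q)ˣ, g1 a
      = gaussSumE χ * (starRingEnd ℂ) (χ (((r * cb : ℤ)) : ZMod q)) := by
    rw [hg1]
    exact gauss_part q hq χ hχ (r * cb)
  rw [hS, hG]
  -- split the conjugate character value
  have hcbc : (χ ((cb : ℤ) : ZMod q))⁻¹ = χ ((c : ℕ) : ZMod q) := by
    have hprod : χ ((cb : ℤ) : ZMod q) * χ ((c : ℕ) : ZMod q) = 1 := by
      rw [← map_mul]
      have : ((cb : ℤ) : ZMod q) * ((c : ℕ) : ZMod q) = 1 := by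
        have := (ZMod.intCast_eq_intCast_iff (cb * (c : ℤ)) 1 q).mpr (by
          rw [Int.modEq_iff_dvd]
          exact ⟨vb, by linear_combination -hcb⟩)
        push_cast at this ⊢
        linear_combination this
      rw [this, map_one]
    exact inv_eq_of_mul_eq_one_left (by linear_combination hprod)
  have hconj : (starRingEnd ℂ) (χ (((r * cb : ℤ)) : ZMod q))
      = (starRingEnd ℂ) (χ ((r : ℤ) : ZMod q)) * χ ((c : ℕ) : ZMod q) := by
    have : (((r * cb : ℤ)) : ZMod q) = ((r : ℤ) : ZMod q) * ((cb : ℤ) : ZMod q) := by push_cast; ring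
    rw [this, map_mul, map_mul, conj_chi χ ((cb : ℤ) : ZMod q), hcbc]
  rw [hconj]
  ring
end

section
/- Let q be a prime, χ a nontrivial Dirichlet character modulo q, d a positive integer with gcd(d, q) = 1, and n an integer. Define Φ(v) = (qd)^{−v} Σ_{γ ∈ (ℤ/dqℤ)ˣ} χ(γ) e(γ' n q / d) ζ(v, γ/(qd)) for v ≠ 1, where γ is taken in {1, …, dq} with gcd(γ, dq) = 1, γ' γ ≡ 1 (mod d), and ζ(v, a) is the analytically continued Hurwitz zeta function. Then (i) the singularity of Φ at v = 1 is removable, so Φ extends to an entire function of v, and (ii) for Re v > 1 one has Φ(v) = Θ_q(n, d; v) := Σ_{c ≥ 1, gcd(c, d) = 1} χ(c) e(c' n q / d) c^{−v}, where c' c ≡ 1 (mod d). -/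
/-- The Hurwitz-zeta expression
`Φ(v) = (qd)^{−v} Σ_{γ ∈ (ℤ/dqℤ)ˣ} χ(γ) e(γ' n q / d) ζ(v, γ/(qd))`,
where `γ` runs over `1 ≤ γ ≤ dq` with `gcd(γ, dq) = 1` and `γ'` is the inverse of `γ` mod `d`. -/
noncomputable def PhiHurwitz (q : ℕ) (χ : DirichletCharacter ℂ q) (n : ℤ) (d : ℕ) (v : ℂ) : ℂ :=
  ((q * d : ℕ) : ℂ) ^ (-v) *
    ∑ γ ∈ (Finset.Icc 1 (d * q)).filter (fun γ => Nat.Coprime γ (d * q)),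
      χ (γ : ZMod q) *
        e ((((((γ : ZMod d))⁻¹).val : ℂ) * n * q) / (d : ℂ)) *
        HurwitzZeta.hurwitzZeta (((γ : ℝ) / (q * d) : ℝ) : UnitAddCircle) v

/-- The Dirichlet series `Θ_q(n, d; v) = Σ_{c ≥ 1, (c,d)=1} χ(c) e(c' n q / d) c^{−v}`,
where `c'` is the inverse of `c` mod `d`. -/
noncomputable def ThetaQ (q : ℕ) (χ : DirichletCharacter ℂ q) (n : ℤ) (d : ℕ) (v : ℂ) : ℂ :=
  ∑' c : ℕ,
    if 0 < c ∧ Nat.Coprime c d then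
      χ (c : ZMod q) * e ((((((c : ZMod d))⁻¹).val : ℂ) * n * q) / (d : ℂ)) * (c : ℂ) ^ (-v)
    else 0

/-- (i) The singularity of `Φ` at `v = 1` is removable, so `Φ` extends to an entire function;
(ii) for `Re v > 1`, `Φ(v) = Θ_q(n, d; v)`. -/
theorem phiHurwitz_entire_and_eq_theta
    (q : ℕ) (hq : q.Prime) (χ : DirichletCharacter ℂ q) (hχ : χ ≠ 1)
    (d : ℕ) (hd : 0 < d) (hdq : Nat.Coprime d q) (n : ℤ) :
    (∃ Ψ : ℂ → ℂ, Differentiable ℂ Ψ ∧ ∀ v : ℂ, v ≠ 1 → Ψ v = PhiHurwitz q χ n d v) ∧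
    (∀ v : ℂ, 1 < v.re → PhiHurwitz q χ n d v = ThetaQ q χ n d v) := by
    classical
  haveI : NeZero q := ⟨hq.pos.ne'⟩
  haveI : NeZero d := ⟨hd.ne'⟩
  haveI : NeZero (d * q) := ⟨Nat.mul_ne_zero hd.ne' hq.pos.ne'⟩
  have hN1 : d * q ≠ 1 := by
    intro h
    exact hq.one_lt.ne' (Nat.eq_one_of_mul_eq_one_left h)
  set Φf : ZMod (d * q) → ℂ := fun j =>
    χ (ZMod.castHom (dvd_mul_left q d) (ZMod q) j) *
      (if IsUnit (ZMod.castHom (dvd_mul_right d q) (ZMod d) j) then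
        e ((((((ZMod.castHom (dvd_mul_right d q) (ZMod d) j))⁻¹).val : ℂ) * n * q) / (d : ℂ))
      else 0) with hΦf
  -- CRT components
  set ψ := ZMod.chineseRemainder hdq with hψ
  have hfst : ∀ x : ZMod (d * q), (ψ x).1 = ZMod.castHom (dvd_mul_right d q) (ZMod d) x := by
    intro x; simp [hψ, ZMod.chineseRemainder, ZMod.castHom_apply, ← ZMod.natCast_val]
  have hsnd : ∀ x : ZMod (d * q), (ψ x).2 = ZMod.castHom (dvd_mul_left q d) (ZMod q) x := by
    intro x; simp [hψ, ZMod.chineseRemainder, ZMod.castHom_apply, ← ZMod.natCast_val]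
  -- Φf vanishes on non-units
  have hvan : ∀ j : ZMod (d * q), ¬ IsUnit j → Φf j = 0 := by
    intro j hj
    have hcases : ¬ (IsUnit (ψ j).1 ∧ IsUnit (ψ j).2) := by
      rintro ⟨h1, h2⟩
      obtain ⟨ua, hua⟩ := h1
      obtain ⟨ub, hub⟩ := h2
      have hpair : IsUnit (ψ j) :=
        ⟨⟨((ua : ZMod d), (ub : ZMod q)), ((ua⁻¹ : (ZMod d)ˣ), (ub⁻¹ : (ZMod q)ˣ)),
          by simp [Prod.ext_iff], by simp [Prod.ext_iff]⟩, Prod.ext hua hub⟩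
      have := hpair.map (ψ.symm : ZMod d × ZMod q →+* ZMod (d * q))
      simp only [RingEquiv.coe_toRingHom, RingEquiv.symm_apply_apply] at this
      exact hj (by simpa using this)
    rw [hfst, hsnd] at hcases
    rcases not_and_or.mp hcases with h | h
    · simp only [hΦf]
      rw [if_neg h, mul_zero]
    · simp only [hΦf]
      rw [χ.map_nonunit h, zero_mul]
  -- A: PhiHurwitz = LFunction Φf for all v
  have hA : ∀ v : ℂ, PhiHurwitz q χ n d v = ZMod.LFunction Φf v := by
    intro v
    unfold PhiHurwitz ZMod.LFunction
    have hdrop : ∑ j : ZMod (d * q), Φf j * HurwitzZeta.hurwitzZeta (ZMod.toAddCircle j) v =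
        ∑ j ∈ Finset.univ.filter (fun j : ZMod (d * q) => IsUnit j),
          Φf j * HurwitzZeta.hurwitzZeta (ZMod.toAddCircle j) v := by
      refine (Finset.sum_filter_of_ne fun j _ hne => ?_).symm
      by_contra hju
      exact hne (by rw [hvan j hju, zero_mul])
    rw [hdrop]
    congr 1
    · rw [Nat.mul_comm q d]
    refine Finset.sum_nbij' (fun γ : ℕ => (γ : ZMod (d * q))) (fun x => x.val) ?_ ?_ ?_ ?_ ?_
    · intro γ hγ
      simp only [Finset.mem_filter, Finset.mem_Icc] at hγ
      exact Finset.mem_filter.mpr ⟨Finset.mem_univ _,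
        (ZMod.isUnit_iff_coprime γ (d * q)).mpr hγ.2⟩
    · intro x hx
      have hx' : IsUnit x := (Finset.mem_filter.mp hx).2
      have hcop : Nat.Coprime x.val (d * q) := by
        rw [← ZMod.isUnit_iff_coprime]
        rwa [ZMod.natCast_zmod_val]
      have hne : x.val ≠ 0 := by
        intro h0
        rw [h0] at hcop
        exact hN1 (Nat.coprime_zero_left _ |>.mp hcop)
      exact Finset.mem_filter.mpr ⟨Finset.mem_Icc.mpr
        ⟨Nat.one_le_iff_ne_zero.mpr hne, (ZMod.val_lt x).le⟩, hcop⟩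
    · intro γ hγ
      simp only [Finset.mem_filter, Finset.mem_Icc] at hγ
      have hlt : γ < d * q := by
        rcases lt_or_eq_of_le hγ.1.2 with h | h
        · exact h
        · exfalso; rw [h] at hγ; exact hN1 ((Nat.coprime_self _).mp hγ.2)
      exact ZMod.val_natCast_of_lt hlt
    · intro x _; exact ZMod.natCast_zmod_val x
    · intro γ hγ
      simp only [Finset.mem_filter, Finset.mem_Icc] at hγ
      have hcd : Nat.Coprime γ d := Nat.Coprime.coprime_dvd_right (dvd_mul_right d q) hγ.2
      have hud : IsUnit ((γ : ZMod d)) := (ZMod.isUnit_iff_coprime γ d).mpr hcd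
      have hcastd : ZMod.castHom (dvd_mul_right d q) (ZMod d) ((γ : ZMod (d * q))) = (γ : ZMod d) := by
        simp [ZMod.castHom_apply, ZMod.cast_natCast]
      have hcastq : ZMod.castHom (dvd_mul_left q d) (ZMod q) ((γ : ZMod (d * q))) = (γ : ZMod q) := by
        simp [ZMod.castHom_apply, ZMod.cast_natCast]
      simp only [hΦf, hcastd, hcastq, if_pos hud, ZMod.toAddCircle_natCast]
      have harg : ((γ : ℝ) / ((q : ℝ) * (d : ℝ)) : ℝ) = ((γ : ℝ) / (((d * q : ℕ) : ℝ)) : ℝ) := by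
        push_cast
        rw [mul_comm]
      rw [harg]
  -- B: sum of Φf is zero
  have hsum : ∑ j, Φf j = 0 := by
    rw [Fintype.sum_equiv ψ.toEquiv Φf (fun p => Φf (ψ.symm p)) (fun x => by simp)]
    have hterm : ∀ p : ZMod d × ZMod q, Φf (ψ.symm p) =
        χ p.2 * (if IsUnit p.1 then
          e (((((p.1⁻¹).val : ℂ)) * n * q) / (d : ℂ)) else 0) := by
      intro p
      have h1 : ZMod.castHom (dvd_mul_right d q) (ZMod d) (ψ.symm p) = p.1 := by
        rw [← hfst, RingEquiv.apply_symm_apply]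
      have h2 : ZMod.castHom (dvd_mul_left q d) (ZMod q) (ψ.symm p) = p.2 := by
        rw [← hsnd, RingEquiv.apply_symm_apply]
      simp only [hΦf, h1, h2]
    simp only [hterm]
    rw [Fintype.sum_prod_type_right]
    simp only [← Finset.mul_sum]
    rw [← Finset.sum_mul, MulChar.sum_eq_zero_of_ne_one hχ, zero_mul]
  -- C: for 1 < re v, LFunction Φf = ThetaQ
  have hC : ∀ v : ℂ, 1 < v.re → ZMod.LFunction Φf v = ThetaQ q χ n d v := by
    intro v hv
    rw [ZMod.LFunction_eq_LSeries _ hv]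
    unfold LSeries ThetaQ
    refine tsum_congr fun c => ?_
    rw [LSeries.term_def]
    rcases eq_or_ne c 0 with rfl | hc
    · simp
    have hcastd : ZMod.castHom (dvd_mul_right d q) (ZMod d) ((c : ZMod (d * q))) = (c : ZMod d) := by
      simp [ZMod.castHom_apply, ZMod.cast_natCast]
    have hcastq : ZMod.castHom (dvd_mul_left q d) (ZMod q) ((c : ZMod (d * q))) = (c : ZMod q) := by
      simp [ZMod.castHom_apply, ZMod.cast_natCast]
    by_cases hcd : Nat.Coprime c d
    · have hud : IsUnit ((c : ZMod d)) := (ZMod.isUnit_iff_coprime c d).mpr hcd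
      rw [if_neg hc, if_pos ⟨Nat.pos_of_ne_zero hc, hcd⟩]
      simp only [hΦf, hcastd, hcastq, if_pos hud]
      rw [Complex.cpow_neg, div_eq_mul_inv]
    · have hud : ¬ IsUnit ((c : ZMod d)) := fun h => hcd ((ZMod.isUnit_iff_coprime c d).mp h)
      rw [if_neg hc, if_neg (fun h => hcd h.2)]
      simp only [hΦf, hcastd, hcastq, if_neg hud, mul_zero, zero_div]
  exact ⟨⟨ZMod.LFunction Φf,
    fun s => ZMod.differentiableAt_LFunction Φf s (Or.inr hsum),
    fun v _ => (hA v).symm⟩,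
    fun v hv => (hA v).trans (hC v hv)⟩
end

section
/- Let χ be a Dirichlet character modulo q, and let λ : ℕ₊ → ℂ satisfy λ(1) = 1 and the Hecke relation λ(m) λ(n) = Σ_{d ∣ gcd(m,n)} χ(d) λ(mn/d²) for all m, n ≥ 1, together with the growth bound |λ(n)| ≤ n^σ for some σ ≥ 0. Let ℓ be a positive integer with gcd(ℓ, q) = 1 and let w ∈ ℂ with Re w > σ + 1. Then ℓ^{−w} · ( Σ_{ℓ₁ℓ₂ = ℓ} μ(ℓ₁) χ(ℓ₁) λ(ℓ₂) ℓ₁^{−w} ) · ( Σ_{r ≥ 1, gcd(r,q)=1} λ(r) r^{−w} ) = Σ_{r ≥ 1, gcd(r,q)=1, ℓ ∣ r} λ(r) r^{−w}, all series converging absolutely. -/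
open ArithmeticFunction
open scoped ArithmeticFunction.Moebius

/-!
Put `L = ∑_{(r,q)=1} λ(r) r^{-w}` and `S(e) = ∑_{(m,q)=1} λ(em) m^{-w}` (`shiftedSeries`).
For `e` coprime to `q`, multiplying `L` termwise by `λ(e)` and expanding with the Hecke
relation gives `λ(e) L = ∑_{dk=e} χ(d) d^{-w} S(k)`, i.e. `λ(e) L = (f ⋆ S)(e)` with
`f(n) = χ(n) n^{-w}` completely multiplicative; the growth bound (with `σ ≥ 0`, since
`λ(er/d²)` is bounded by `(er)^σ`) makes every series absolutely convergent, which justifies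
exchanging the finite sum over `d` with the series. As `μf` is the Dirichlet inverse of `f`,
the left-hand side becomes `ℓ^{-w} ((μf) ⋆ f ⋆ S)(ℓ) = ℓ^{-w} S(ℓ)`, and the substitution
`r = ℓm` turns the right-hand side into `ℓ^{-w} S(ℓ)` as well.
-/

theorem ArithmeticFunction.pmul_moebius_mul_eq_one {R : Type*} [CommRing R]
    {f : ArithmeticFunction R} (hf1 : f 1 = 1) (hf : ∀ m n, f (m * n) = f m * f n) :
    f.pmul (μ : ArithmeticFunction R) * f = 1 := by
  ext n
  have hμ := congrArg (· n) (coe_moebius_mul_coe_zeta (R := R))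
  simp only [coe_mul_zeta_apply, intCoe_apply] at hμ
  calc (f.pmul ↑μ * f) n = ∑ p ∈ n.divisorsAntidiagonal, (μ p.1 : R) * f n := by
        rw [mul_apply]
        refine Finset.sum_congr rfl fun p hp => ?_
        rw [pmul_apply, intCoe_apply, ← (Nat.mem_divisorsAntidiagonal.mp hp).1, hf]
        ring
    _ = (1 : ArithmeticFunction R) n * f n := by
        rw [← Finset.sum_mul, Nat.sum_divisorsAntidiagonal (fun a _ => (μ a : R)), hμ]
    _ = (1 : ArithmeticFunction R) n := by
        rw [one_apply]
        split_ifs with h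
        · rw [h, hf1, one_mul]
        · rw [zero_mul]

section

variable {q : ℕ} {lam : ℕ → ℂ} {σ : ℝ} {w : ℂ}

def HeckeRelations (χ : DirichletCharacter ℂ q) (lam : ℕ → ℂ) : Prop :=
  ∀ m n : ℕ, 0 < m → 0 < n →
    lam m * lam n = ∑ d ∈ (Nat.gcd m n).divisors, χ (d : ZMod q) * lam (m * n / d ^ 2)

noncomputable def shiftedSeries (q : ℕ) (lam : ℕ → ℂ) (w : ℂ) (e : ℕ) : ℂ :=
  ∑' m : ℕ, if 0 < m ∧ m.Coprime q then lam (e * m) * (m : ℂ) ^ (-w) else 0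

noncomputable def twistedCpow (χ : DirichletCharacter ℂ q) (w : ℂ) : ArithmeticFunction ℂ :=
  toArithmeticFunction fun n => χ n * (n : ℂ) ^ (-w)

theorem twistedCpow_apply (χ : DirichletCharacter ℂ q) (w : ℂ) {n : ℕ} (hn : n ≠ 0) :
    twistedCpow χ w n = χ n * (n : ℂ) ^ (-w) := by
  simp [twistedCpow, toArithmeticFunction, hn]

theorem twistedCpow_one (χ : DirichletCharacter ℂ q) (w : ℂ) : twistedCpow χ w 1 = 1 := by
  simp [twistedCpow_apply]

theorem twistedCpow_mul (χ : DirichletCharacter ℂ q) (w : ℂ) (m n : ℕ) :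
    twistedCpow χ w (m * n) = twistedCpow χ w m * twistedCpow χ w n := by
  rcases eq_or_ne m 0 with rfl | hm
  · simp
  rcases eq_or_ne n 0 with rfl | hn
  · simp
  rw [twistedCpow_apply χ w (mul_ne_zero hm hn), twistedCpow_apply χ w hm,
    twistedCpow_apply χ w hn, Nat.cast_mul, map_mul, Nat.cast_mul,
    Complex.natCast_mul_natCast_cpow]
  ring

theorem norm_mul_cpow_neg_le (hσ : 0 ≤ σ) (hgrowth : ∀ n : ℕ, 0 < n → ‖lam n‖ ≤ (n : ℝ) ^ σ)
    {n e r : ℕ} (hn : 0 < n) (hr : 0 < r) (hner : n ≤ e * r) :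
    ‖lam n * (r : ℂ) ^ (-w)‖ ≤ (e : ℝ) ^ σ * (r : ℝ) ^ (σ - w.re) := by
  have hlam : ‖lam n‖ ≤ (e : ℝ) ^ σ * (r : ℝ) ^ σ := calc
    ‖lam n‖ ≤ (n : ℝ) ^ σ := hgrowth n hn
    _ ≤ ((e * r : ℕ) : ℝ) ^ σ := Real.rpow_le_rpow (by positivity) (by exact_mod_cast hner) hσ
    _ = (e : ℝ) ^ σ * (r : ℝ) ^ σ := by
        rw [Nat.cast_mul, Real.mul_rpow (by positivity) (by positivity)]
  rw [norm_mul, Complex.norm_natCast_cpow_of_pos hr, Complex.neg_re, sub_eq_add_neg,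
    Real.rpow_add (by exact_mod_cast hr), ← mul_assoc]
  exact mul_le_mul_of_nonneg_right hlam (by positivity)

theorem summable_norm_ite_mul_cpow (hσ : 0 ≤ σ)
    (hgrowth : ∀ n : ℕ, 0 < n → ‖lam n‖ ≤ (n : ℝ) ^ σ) (hw : σ + 1 < w.re)
    {P : ℕ → Prop} [DecidablePred P] (f : ℕ → ℕ) (e : ℕ)
    (hP : ∀ r, P r → 0 < r ∧ 0 < f r ∧ f r ≤ e * r) :
    Summable fun r => ‖if P r then lam (f r) * (r : ℂ) ^ (-w) else 0‖ := by
  refine Summable.of_nonneg_of_le (fun r => norm_nonneg _) (fun r => ?_)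
    ((Real.summable_nat_rpow.mpr (by linarith : σ - w.re < -1)).mul_left ((e : ℝ) ^ σ))
  split_ifs with h
  · obtain ⟨hr, hf, hfe⟩ := hP r h
    exact norm_mul_cpow_neg_le hσ hgrowth hf hr hfe
  · rw [norm_zero]
    positivity

theorem tsum_ite_dvd_eq {d : ℕ} (hd : 0 < d) (hdq : d.Coprime q) (g : ℕ → ℂ) :
    ∑' r : ℕ, (if 0 < r ∧ r.Coprime q ∧ d ∣ r then g r * (r : ℂ) ^ (-w) else 0)
      = (d : ℂ) ^ (-w) *
          ∑' m : ℕ, if 0 < m ∧ m.Coprime q then g (d * m) * (m : ℂ) ^ (-w) else 0 := by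
  rw [← tsum_mul_left, ← (mul_right_injective₀ hd.ne').tsum_eq]
  · refine tsum_congr fun m => ?_
    have hcond : (0 < d * m ∧ (d * m).Coprime q ∧ d ∣ d * m) ↔ (0 < m ∧ m.Coprime q) := by
      simp only [Nat.coprime_mul_iff_left, iff_true_intro hdq, true_and, dvd_mul_right, and_true,
        Nat.mul_pos_iff_of_pos_left hd]
    simp only [hcond]
    split_ifs
    · rw [Nat.cast_mul, Complex.natCast_mul_natCast_cpow]
      ring
    · rw [mul_zero]
  · intro r hr
    by_contra hnot
    exact hr (if_neg fun ⟨_, _, m, hm⟩ => hnot ⟨m, hm.symm⟩)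

theorem Nat.divisors_gcd_eq_filter_dvd {e : ℕ} (he : e ≠ 0) (r : ℕ) :
    (Nat.gcd e r).divisors = e.divisors.filter (· ∣ r) := by
  ext d
  simp [Nat.dvd_gcd_iff, Nat.gcd_eq_zero_iff, he]

theorem HeckeRelations.mul_ite_eq_sum {χ : DirichletCharacter ℂ q} (hecke : HeckeRelations χ lam)
    {e : ℕ} (he : 0 < e) (r : ℕ) :
    lam e * (if 0 < r ∧ r.Coprime q then lam r * (r : ℂ) ^ (-w) else 0)
      = ∑ d ∈ e.divisors, χ d *
          if 0 < r ∧ r.Coprime q ∧ d ∣ r then lam (e * r / d ^ 2) * (r : ℂ) ^ (-w) else 0 := by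
  by_cases hr : 0 < r ∧ r.Coprime q
  · rw [if_pos hr, ← mul_assoc, hecke e r he hr.1, Finset.sum_mul,
      Nat.divisors_gcd_eq_filter_dvd he.ne', Finset.sum_filter]
    refine Finset.sum_congr rfl fun d _ => ?_
    by_cases hdr : d ∣ r
    · rw [if_pos hdr, if_pos ⟨hr.1, hr.2, hdr⟩]
      ring
    · rw [if_neg hdr, if_neg fun h => hdr h.2.2, mul_zero]
  · rw [if_neg hr, mul_zero]
    exact (Finset.sum_eq_zero fun d _ => by rw [if_neg fun h => hr ⟨h.1, h.2.1⟩, mul_zero]).symm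

theorem HeckeRelations.mul_tsum_eq {χ : DirichletCharacter ℂ q} (hecke : HeckeRelations χ lam)
    (hσ : 0 ≤ σ) (hgrowth : ∀ n : ℕ, 0 < n → ‖lam n‖ ≤ (n : ℝ) ^ σ) (hw : σ + 1 < w.re)
    {e : ℕ} (he : 0 < e) (heq : e.Coprime q) :
    lam e * ∑' r : ℕ, (if 0 < r ∧ r.Coprime q then lam r * (r : ℂ) ^ (-w) else 0)
      = (twistedCpow χ w * toArithmeticFunction (shiftedSeries q lam w)) e := by
  rw [← tsum_mul_left, tsum_congr (hecke.mul_ite_eq_sum he), Summable.tsum_finsetSum]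
  · rw [mul_apply, Nat.sum_divisorsAntidiagonal
      (fun a b => twistedCpow χ w a * toArithmeticFunction (shiftedSeries q lam w) b)]
    refine Finset.sum_congr rfl fun d hd => ?_
    obtain ⟨k, rfl⟩ := Nat.dvd_of_mem_divisors hd
    have hd0 : 0 < d := Nat.pos_of_mul_pos_right he
    have hk0 : 0 < k := Nat.pos_of_mul_pos_left he
    have hcancel : ∀ m, d * k * (d * m) / d ^ 2 = k * m := fun m => by
      rw [show d * k * (d * m) = d ^ 2 * (k * m) by ring,
        Nat.mul_div_cancel_left _ (by positivity)]
    rw [tsum_mul_left, tsum_ite_dvd_eq hd0 (Nat.Coprime.coprime_mul_right heq),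
      Nat.mul_div_cancel_left k hd0, twistedCpow_apply χ w hd0.ne']
    simp only [hcancel]
    simp [toArithmeticFunction, hk0.ne', shiftedSeries, mul_assoc]
  · intro d hd
    have hde := Nat.dvd_of_mem_divisors hd
    refine ((summable_norm_ite_mul_cpow hσ hgrowth hw (fun r => e * r / d ^ 2) e
      fun r ⟨hr, _, hdr⟩ => ⟨hr, ?_, Nat.div_le_self _ _⟩).of_norm).mul_left _
    exact Nat.div_pos (Nat.le_of_dvd (Nat.mul_pos he hr) (pow_two d ▸ mul_dvd_mul hde hdr))
      (pow_pos (Nat.pos_of_dvd_of_pos hde he) 2)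

end

theorem hecke_mobius_sieve_general
    (q : ℕ) (χ : DirichletCharacter ℂ q) (lam : ℕ → ℂ) (σ : ℝ) (hσ : 0 ≤ σ)
    (hecke : ∀ m n : ℕ, 0 < m → 0 < n →
      lam m * lam n
        = ∑ d ∈ (Nat.gcd m n).divisors, χ (d : ZMod q) * lam (m * n / d ^ 2))
    (hgrowth : ∀ n : ℕ, 0 < n → ‖lam n‖ ≤ (n : ℝ) ^ σ)
    (ℓ : ℕ) (hℓ : 0 < ℓ) (hℓq : Nat.Coprime ℓ q)
    (w : ℂ) (hw : σ + 1 < w.re) :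
    Summable (fun r : ℕ => ‖
      (if 0 < r ∧ Nat.Coprime r q then lam r * (r : ℂ) ^ (-w) else 0)‖) ∧
    Summable (fun r : ℕ => ‖
      (if 0 < r ∧ Nat.Coprime r q ∧ ℓ ∣ r then lam r * (r : ℂ) ^ (-w) else 0)‖) ∧
    (ℓ : ℂ) ^ (-w) *
        (∑ p ∈ ℓ.divisorsAntidiagonal,
          (ArithmeticFunction.moebius p.1 : ℂ) * χ (p.1 : ZMod q) * lam p.2 *
            (p.1 : ℂ) ^ (-w)) *
        (∑' r : ℕ, if 0 < r ∧ Nat.Coprime r q then lam r * (r : ℂ) ^ (-w) else 0)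
      = ∑' r : ℕ, if 0 < r ∧ Nat.Coprime r q ∧ ℓ ∣ r then lam r * (r : ℂ) ^ (-w) else 0 := by
  refine ⟨summable_norm_ite_mul_cpow hσ hgrowth hw (fun r => r) 1 fun r h => ⟨h.1, h.1, by simp⟩,
    summable_norm_ite_mul_cpow hσ hgrowth hw (fun r => r) 1 fun r h => ⟨h.1, h.1, by simp⟩, ?_⟩
  have hconv : (∑ p ∈ ℓ.divisorsAntidiagonal,
        (μ p.1 : ℂ) * χ (p.1 : ZMod q) * lam p.2 * (p.1 : ℂ) ^ (-w)) *
        (∑' r : ℕ, if 0 < r ∧ Nat.Coprime r q then lam r * (r : ℂ) ^ (-w) else 0)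
      = ((twistedCpow χ w).pmul μ *
          (twistedCpow χ w * toArithmeticFunction (shiftedSeries q lam w))) ℓ := by
    rw [Finset.sum_mul, mul_apply]
    refine Finset.sum_congr rfl fun p hp => ?_
    have hp1 : p.1 ≠ 0 := Nat.left_ne_zero_of_mem_divisorsAntidiagonal hp
    have hp2 : p.2 ∣ ℓ := Dvd.intro_left _ (Nat.mem_divisorsAntidiagonal.mp hp).1
    rw [pmul_apply, intCoe_apply, twistedCpow_apply χ w hp1,
      ← HeckeRelations.mul_tsum_eq hecke hσ hgrowth hw (Nat.pos_of_dvd_of_pos hp2 hℓ)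
        (hℓq.coprime_dvd_left hp2)]
    ring
  rw [tsum_ite_dvd_eq hℓ hℓq lam, mul_assoc, hconv, ← mul_assoc,
    pmul_moebius_mul_eq_one (twistedCpow_one χ w) (twistedCpow_mul χ w), one_mul]
  simp [toArithmeticFunction, hℓ.ne', shiftedSeries]

/-- For a function `λ` satisfying the Hecke relations with nebentypus `χ` modulo `q`
and polynomial growth, and `ℓ` coprime to `q`, Möbius inversion gives
`ℓ^{−w} (Σ_{ℓ₁ℓ₂=ℓ} μ(ℓ₁) χ(ℓ₁) λ(ℓ₂) ℓ₁^{−w}) (Σ_{(r,q)=1} λ(r) r^{−w})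
  = Σ_{(r,q)=1, ℓ∣r} λ(r) r^{−w}`, all series converging absolutely. -/
theorem hecke_mobius_sieve
    (q : ℕ) (χ : DirichletCharacter ℂ q) (lam : ℕ → ℂ) (σ : ℝ) (hσ : 0 ≤ σ)
    (hlam1 : lam 1 = 1)
    (hecke : ∀ m n : ℕ, 0 < m → 0 < n →
      lam m * lam n
        = ∑ d ∈ (Nat.gcd m n).divisors, χ (d : ZMod q) * lam (m * n / d ^ 2))
    (hgrowth : ∀ n : ℕ, 0 < n → ‖lam n‖ ≤ (n : ℝ) ^ σ)
    (ℓ : ℕ) (hℓ : 0 < ℓ) (hℓq : Nat.Coprime ℓ q)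
    (w : ℂ) (hw : σ + 1 < w.re) :
    Summable (fun r : ℕ => ‖
      (if 0 < r ∧ Nat.Coprime r q then lam r * (r : ℂ) ^ (-w) else 0)‖) ∧
    Summable (fun r : ℕ => ‖
      (if 0 < r ∧ Nat.Coprime r q ∧ ℓ ∣ r then lam r * (r : ℂ) ^ (-w) else 0)‖) ∧
    (ℓ : ℂ) ^ (-w) *
        (∑ p ∈ ℓ.divisorsAntidiagonal,
          (ArithmeticFunction.moebius p.1 : ℂ) * χ (p.1 : ZMod q) * lam p.2 *
            (p.1 : ℂ) ^ (-w)) *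
        (∑' r : ℕ, if 0 < r ∧ Nat.Coprime r q then lam r * (r : ℂ) ^ (-w) else 0)
      = ∑' r : ℕ, if 0 < r ∧ Nat.Coprime r q ∧ ℓ ∣ r then lam r * (r : ℂ) ^ (-w) else 0 :=
  hecke_mobius_sieve_general q χ lam σ hσ hecke hgrowth ℓ hℓ hℓq w hw
end

section
/- Let τ ∈ ℝ with τ ≠ 0 and let 0 ≤ θ < 1/2. Then there exist real numbers t₀ > 0 and t₁ > 0 such that: (i) Re Q_τ(t) ≥ 1/2 for all real t with |t| ≥ t₀; (ii) Re Q_τ(t) ≥ −1 for all t ∈ ℝ ∪ {iσ : σ ∈ [−θ, θ]}; and (iii) −sgn(τ) · Im Q_τ(t) ≥ t₁ for all t ∈ [−t₀, t₀] ∪ {iσ : σ ∈ [−θ, θ]}. -/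
/-- `Q_τ(t) = (1 − i sinh(πτ)/cosh(πt))/(1 + i sinh(πτ)/cosh(πt))`. -/
noncomputable def Qfun (τ : ℝ) (t : ℂ) : ℂ :=
  (1 - Complex.I * (Real.sinh (Real.pi * τ) : ℂ) / Complex.cosh (Real.pi * t)) /
    (1 + Complex.I * (Real.sinh (Real.pi * τ) : ℂ) / Complex.cosh (Real.pi * t))

/-! With `a = sinh(πτ)` and `c = cosh(πt)`, which is real and positive on the whole domain
(it equals `cos(πσ)` at `t = iσ`), `Q_τ(t) = (c - ia)/(c + ia)`, so
`Re Q_τ(t) = (c² - a²)/(c² + a²) ≥ -1` and `-sgn(τ) Im Q_τ(t) = 2|a|c/(c² + a²)`.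
Choosing `t₀` with `cosh(πt₀) = 2|a| + 1` gives `c ≥ 2|a|`, hence `Re Q_τ(t) ≥ 1/2`, for `|t| ≥ t₀`;
at the remaining points `c ∈ [cos(πθ), 2|a| + 1]`, on which `2|a|c/(c² + a²)` is bounded below by
`2|a| cos(πθ)/((2|a| + 1)² + a²) > 0`. -/

section Cayley

open Complex

lemma re_sub_I_mul_div_add_I_mul (a c : ℝ) :
    ((c - I * a) / (c + I * a)).re = (c ^ 2 - a ^ 2) / (c ^ 2 + a ^ 2) := by
  simp only [div_re, normSq_apply, add_re, add_im, sub_re, sub_im, mul_re, mul_im, I_re, I_im,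
    ofReal_re, ofReal_im]
  ring_nf

lemma im_sub_I_mul_div_add_I_mul (a c : ℝ) :
    ((c - I * a) / (c + I * a)).im = -(2 * a * c) / (c ^ 2 + a ^ 2) := by
  simp only [div_im, normSq_apply, add_re, add_im, sub_re, sub_im, mul_re, mul_im, I_re, I_im,
    ofReal_re, ofReal_im]
  ring_nf

end Cayley

lemma neg_one_le_sq_sub_sq_div_sq_add_sq (a c : ℝ) :
    -1 ≤ (c ^ 2 - a ^ 2) / (c ^ 2 + a ^ 2) := by
  rcases (add_nonneg (sq_nonneg c) (sq_nonneg a)).eq_or_lt with h | h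
  · rw [← h, div_zero]; norm_num
  · rw [le_div_iff₀ h]; nlinarith [sq_nonneg c]

lemma half_le_sq_sub_sq_div_sq_add_sq {a c : ℝ} (hc : 0 < c) (h : 2 * |a| ≤ c) :
    1 / 2 ≤ (c ^ 2 - a ^ 2) / (c ^ 2 + a ^ 2) := by
  rw [le_div_iff₀ (by positivity)]
  nlinarith [sq_abs a, abs_nonneg a]

lemma two_mul_abs_mul_div_le_of_le_of_le {a m c C : ℝ} (hm : 0 < m) (hmc : m ≤ c)
    (hcC : c ≤ C) : 2 * |a| * m / (C ^ 2 + a ^ 2) ≤ 2 * |a| * c / (c ^ 2 + a ^ 2) := by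
  have hc : 0 < c := hm.trans_le hmc
  rw [div_le_div_iff₀ (by nlinarith) (by positivity)]
  have : m * (c ^ 2 + a ^ 2) ≤ c * (C ^ 2 + a ^ 2) := by
    nlinarith [mul_nonneg (sub_nonneg.2 hmc) (sq_nonneg a),
      mul_le_mul hcC hcC hc.le (hc.le.trans hcC)]
  nlinarith [abs_nonneg a]

section Trigonometric

open Real

lemma sign_mul_sinh_pi_mul (τ : ℝ) : sign τ * sinh (π * τ) = |sinh (π * τ)| := by
  rcases lt_trichotomy τ 0 with h | rfl | h
  · have : sinh (π * τ) < 0 := sinh_neg_iff.2 (mul_neg_of_pos_of_neg pi_pos h)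
    rw [sign_of_neg h, abs_of_neg this]; ring
  · simp
  · have : 0 < sinh (π * τ) := sinh_pos_iff.2 (mul_pos pi_pos h)
    rw [sign_of_pos h, abs_of_pos this]; ring

lemma cosh_pi_mul_ofReal (t : ℝ) : Complex.cosh (π * t) = cosh (π * t) := by
  push_cast; rfl

lemma cosh_pi_mul_I_mul (σ : ℝ) : Complex.cosh (π * (Complex.I * σ)) = cos (π * σ) := by
  rw [mul_left_comm, mul_comm, Complex.cosh_mul_I]
  push_cast; rfl

lemma cos_pi_mul_pos {θ : ℝ} (h : |θ| < 1 / 2) : 0 < cos (π * θ) := by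
  rw [← cos_abs, abs_mul, abs_of_pos pi_pos]
  exact cos_pos_of_mem_Ioo ⟨by nlinarith [abs_nonneg θ, pi_pos], by nlinarith [pi_pos]⟩

lemma cos_pi_mul_le_cos_pi_mul {σ θ : ℝ} (h : |σ| ≤ θ) (hθ : θ ≤ 1) :
    cos (π * θ) ≤ cos (π * σ) := by
  rw [← cos_abs (π * σ), abs_mul, abs_of_pos pi_pos]
  exact cos_le_cos_of_nonneg_of_le_pi (by positivity) (by nlinarith [pi_pos])
    (by nlinarith [pi_pos])

lemma cosh_pi_mul_le_cosh_pi_mul {s t : ℝ} (h : |s| ≤ |t|) : cosh (π * s) ≤ cosh (π * t) := by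
  rw [cosh_le_cosh, abs_mul, abs_mul]
  gcongr

variable (τ : ℝ) {t : ℂ} {c : ℝ}

lemma Qfun_eq_of_cosh_eq (hc : c ≠ 0) (h : Complex.cosh (π * t) = c) :
    Qfun τ t = (c - Complex.I * sinh (π * τ)) / (c + Complex.I * sinh (π * τ)) := by
  have hc' : (c : ℂ) ≠ 0 := Complex.ofReal_ne_zero.2 hc
  rw [Qfun, h, one_sub_div hc', one_add_div hc', div_div_div_cancel_right₀ hc']

lemma Qfun_re_of_cosh_eq (hc : c ≠ 0) (h : Complex.cosh (π * t) = c) :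
    (Qfun τ t).re = (c ^ 2 - sinh (π * τ) ^ 2) / (c ^ 2 + sinh (π * τ) ^ 2) := by
  rw [Qfun_eq_of_cosh_eq τ hc h, re_sub_I_mul_div_add_I_mul]

lemma neg_sign_mul_Qfun_im_of_cosh_eq (hc : c ≠ 0) (h : Complex.cosh (π * t) = c) :
    -sign τ * (Qfun τ t).im = 2 * |sinh (π * τ)| * c / (c ^ 2 + sinh (π * τ) ^ 2) := by
  rw [Qfun_eq_of_cosh_eq τ hc h, im_sub_I_mul_div_add_I_mul, ← sign_mul_sinh_pi_mul]
  ring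

end Trigonometric

/-- Properties of `Q_τ` on `ℝ ∪ {iσ : |σ| ≤ θ}` for `τ ≠ 0`, `0 ≤ θ < 1/2`:
there are `t₀, t₁ > 0` with (i) `Re Q_τ(t) ≥ 1/2` for real `|t| ≥ t₀`;
(ii) `Re Q_τ(t) ≥ −1` on the whole domain; (iii) `−sgn(τ)·Im Q_τ(t) ≥ t₁`
for real `|t| ≤ t₀` and for `t = iσ`, `|σ| ≤ θ`. -/
theorem Qfun_properties (τ : ℝ) (hτ : τ ≠ 0) (θ : ℝ) (hθ0 : 0 ≤ θ) (hθ : θ < 1 / 2) :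
    ∃ t₀ > (0 : ℝ), ∃ t₁ > (0 : ℝ),
      (∀ t : ℝ, t₀ ≤ |t| → 1 / 2 ≤ (Qfun τ (t : ℂ)).re) ∧
      (∀ t : ℝ, -1 ≤ (Qfun τ (t : ℂ)).re) ∧
      (∀ σ : ℝ, |σ| ≤ θ → -1 ≤ (Qfun τ (Complex.I * σ)).re) ∧
      (∀ t : ℝ, |t| ≤ t₀ → t₁ ≤ -Real.sign τ * (Qfun τ (t : ℂ)).im) ∧
      (∀ σ : ℝ, |σ| ≤ θ → t₁ ≤ -Real.sign τ * (Qfun τ (Complex.I * σ)).im) := by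
  set a := Real.sinh (Real.pi * τ)
  have ha : 0 < |a| := abs_pos.2 (Real.sinh_ne_zero.2 (mul_ne_zero Real.pi_ne_zero hτ))
  set C := 2 * |a| + 1
  set t₀ := Real.arcosh C / Real.pi
  have hC : Real.cosh (Real.pi * t₀) = C := by
    rw [mul_div_cancel₀ _ Real.pi_ne_zero, Real.cosh_arcosh (by linarith)]
  have ht₀ : 0 < t₀ := div_pos (Real.arcosh_pos (by linarith)) Real.pi_pos
  set m := Real.cos (Real.pi * θ)
  have hm : 0 < m := cos_pi_mul_pos (by rwa [abs_of_nonneg hθ0])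
  have hcos_ne (σ : ℝ) (hσ : |σ| ≤ θ) : Real.cos (Real.pi * σ) ≠ 0 :=
    (hm.trans_le (cos_pi_mul_le_cos_pi_mul hσ (by linarith))).ne'
  have hcosh_ne (t : ℝ) : Real.cosh (Real.pi * t) ≠ 0 := (Real.cosh_pos _).ne'
  refine ⟨t₀, ht₀, 2 * |a| * m / (C ^ 2 + a ^ 2), by positivity,
    fun t ht => ?_, fun t => ?_, fun σ hσ => ?_, fun t ht => ?_, fun σ hσ => ?_⟩
  · rw [Qfun_re_of_cosh_eq τ (hcosh_ne t) (cosh_pi_mul_ofReal t)]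
    have hCt := cosh_pi_mul_le_cosh_pi_mul (ht.trans' (abs_of_pos ht₀).le)
    exact half_le_sq_sub_sq_div_sq_add_sq (Real.cosh_pos _) (by linarith)
  · rw [Qfun_re_of_cosh_eq τ (hcosh_ne t) (cosh_pi_mul_ofReal t)]
    exact neg_one_le_sq_sub_sq_div_sq_add_sq _ _
  · rw [Qfun_re_of_cosh_eq τ (hcos_ne σ hσ) (cosh_pi_mul_I_mul σ)]
    exact neg_one_le_sq_sub_sq_div_sq_add_sq _ _
  · rw [neg_sign_mul_Qfun_im_of_cosh_eq τ (hcosh_ne t) (cosh_pi_mul_ofReal t)]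
    refine two_mul_abs_mul_div_le_of_le_of_le hm ((Real.cos_le_one _).trans (Real.one_le_cosh _)) ?_
    exact hC ▸ cosh_pi_mul_le_cosh_pi_mul (ht.trans (le_abs_self t₀))
  · rw [neg_sign_mul_Qfun_im_of_cosh_eq τ (hcos_ne σ hσ) (cosh_pi_mul_I_mul σ)]
    refine two_mul_abs_mul_div_le_of_le_of_le hm (cos_pi_mul_le_cos_pi_mul hσ (by linarith)) ?_
    linarith [Real.cos_le_one (Real.pi * σ)]
end
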